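/- Let x_1,…,x_n be nonzero vectors in ℂ^k, let x̂_i = x_i/‖x_i‖, let A ∈ M_{k,n} be the matrix with columns x̂_1,…,x̂_n, and let Δ be the set of all 2^n diagonal n×n matrices whose diagonal entries are ±1. Then span{D AᴴA D' : D, D' ∈ Δ} = S_{G(x)}. -/

import Mathlib

/-!
Entry `(i, j)` of `D B D'`, for `±1` diagonal matrices `D, D'`, is `±B i j`; hence every such
product lies in the span of the matrix units on the support of `B`. Conversely the span of the
`±1` diagonal matrices contains every `E_ii = (1 - D_i) / 2`, where `D_i` flips the sign at `i`,
so the span of the products `D B D'` contains `E_ii B E_jj = B i j • E_ij`. For the normalised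
Gram matrix `B = AᴴA`, `B i j` is a nonzero multiple of `⟨x_i, x_j⟩`, which is nonzero if `i = j`.
-/

open Matrix
open scoped ComplexOrder

/-- The Euclidean norm of a vector in `ℂ^k`. -/
noncomputable def eucNorm {k : ℕ} (v : Fin k → ℂ) : ℝ :=
  ‖(WithLp.equiv 2 (Fin k → ℂ)).symm v‖

namespace Matrix

variable {ι κ R K : Type*}

def signDiagonal [Zero R] [One R] [Neg R] [DecidableEq ι] (ε : ι → Bool) : Matrix ι ι R :=
  diagonal fun i => if ε i then 1 else -1

theorem signDiagonal_mul_mul_signDiagonal_apply [Ring R] [Fintype ι] [DecidableEq ι]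
    (B : Matrix ι ι R) (ε ε' : ι → Bool) (i j : ι) :
    (signDiagonal ε * B * signDiagonal ε' : Matrix ι ι R) i j =
      (if ε i then 1 else -1) * B i j * (if ε' j then 1 else -1) := by
  simp only [signDiagonal, mul_diagonal, diagonal_mul]

theorem mem_span_single_of_support_subset [Semiring R] [Fintype ι] [DecidableEq ι]
    {B M : Matrix ι ι R} (h : ∀ i j, B i j = 0 → M i j = 0) :
    M ∈ Submodule.span R {E | ∃ i j, B i j ≠ 0 ∧ E = single i j 1} := by
  rw [matrix_eq_sum_single M]
  refine Submodule.sum_mem _ fun i _ => Submodule.sum_mem _ fun j _ => ?_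
  by_cases hB : B i j = 0
  · simp [h i j hB]
  · rw [← mul_one (M i j), ← smul_eq_mul, ← smul_single]
    exact Submodule.smul_mem _ _ (Submodule.subset_span ⟨i, j, hB, rfl⟩)

theorem span_range_signDiagonal_mul_span_singleton_mul [CommRing R] [Fintype ι] [DecidableEq ι]
    (B : Matrix ι ι R) :
    Submodule.span R (Set.range signDiagonal) * Submodule.span R {B} *
        Submodule.span R (Set.range signDiagonal) =
      Submodule.span R {M | ∃ ε ε', M = signDiagonal ε * B * signDiagonal ε'} := by
  rw [Submodule.span_mul_span, Submodule.span_mul_span]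
  congr 1
  ext M
  simp only [Set.mem_mul, Set.mem_range, Set.mem_singleton_iff, Set.mem_ofPred_eq]
  constructor
  · rintro ⟨_, ⟨_, ⟨ε, rfl⟩, _, rfl, rfl⟩, _, ⟨ε', rfl⟩, rfl⟩
    exact ⟨ε, ε', rfl⟩
  · rintro ⟨ε, ε', rfl⟩
    exact ⟨_, ⟨_, ⟨ε, rfl⟩, _, rfl, rfl⟩, _, ⟨ε', rfl⟩, rfl⟩

section Field

variable [Field K] [NeZero (2 : K)] [DecidableEq ι]

theorem single_self_mem_span_range_signDiagonal (i : ι) :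
    single i i (1 : K) ∈ Submodule.span K (Set.range (signDiagonal (ι := ι) (R := K))) := by
  have h : single i i (1 : K) =
      (2 : K)⁻¹ • (signDiagonal (fun _ => true) - signDiagonal fun a => decide (a ≠ i)) := by
    rw [← diagonal_single]
    ext a b
    simp only [signDiagonal, diagonal_apply, smul_apply, sub_apply, Pi.single_apply]
    split_ifs <;> simp_all [one_add_one_eq_two, inv_mul_cancel₀ (two_ne_zero (α := K))]
  rw [h]
  exact Submodule.smul_mem _ _ (Submodule.sub_mem _ (Submodule.subset_span ⟨_, rfl⟩)
    (Submodule.subset_span ⟨_, rfl⟩))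

theorem span_signDiagonal_mul_mul_signDiagonal [Fintype ι] (B : Matrix ι ι K) :
    Submodule.span K {M | ∃ ε ε', M = signDiagonal ε * B * signDiagonal ε'} =
      Submodule.span K {E | ∃ i j, B i j ≠ 0 ∧ E = single i j 1} := by
  apply le_antisymm
  · rw [Submodule.span_le]
    rintro _ ⟨ε, ε', rfl⟩
    refine mem_span_single_of_support_subset fun i j hB => ?_
    rw [signDiagonal_mul_mul_signDiagonal_apply, hB, mul_zero, zero_mul]
  · rw [Submodule.span_le]
    rintro _ ⟨i, j, hB, rfl⟩
    have h : single i j (1 : K) = (B i j)⁻¹ • (single i i 1 * B * single j j 1) := by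
      rw [single_mul_mul_single, one_mul, mul_one, smul_single, smul_eq_mul, inv_mul_cancel₀ hB]
    rw [h, ← span_range_signDiagonal_mul_span_singleton_mul]
    exact Submodule.smul_mem _ _ (Submodule.mul_mem_mul (Submodule.mul_mem_mul
      (single_self_mem_span_range_signDiagonal i) (Submodule.mem_span_singleton_self B))
      (single_self_mem_span_range_signDiagonal j))

end Field

theorem conjTranspose_mul_self_of_scaled_columns_apply [Fintype κ] [CommSemiring R] [StarRing R]
    (c : ι → R) (x : ι → κ → R) (i j : ι) :
    ((of fun r i => c i * x i r)ᴴ * of fun r i => c i * x i r) i j =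
      star (c i) * c j * (star (x i) ⬝ᵥ x j) := by
  simp only [mul_apply, conjTranspose_apply, of_apply, dotProduct, Finset.mul_sum, star_mul',
    Pi.star_apply]
  exact Finset.sum_congr rfl fun r _ => by ring

end Matrix

theorem eucNorm_ne_zero {k : ℕ} {v : Fin k → ℂ} (hv : v ≠ 0) : eucNorm v ≠ 0 := by
  rw [eucNorm, norm_ne_zero_iff]
  exact fun h => hv ((WithLp.equiv 2 (Fin k → ℂ)).symm.injective h)

/-- with `A` the matrix of normalised columns `xᵢ/‖xᵢ‖` and `Δ` the `±1`
diagonal matrices, `span{D Aᴴ A D' : D, D' ∈ Δ}` equals the graph operator system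
`S_{G(x)}` of the non-orthogonality graph of `x`. -/
theorem delta_span_eq_graphOS (n k : ℕ) (x : Fin n → Fin k → ℂ) (hx : ∀ i, x i ≠ 0) :
    Submodule.span ℂ {M : Matrix (Fin n) (Fin n) ℂ | ∃ ε ε' : Fin n → Bool,
      M = (Matrix.diagonal fun i => if ε i then (1 : ℂ) else -1) *
        (Matrix.of fun r i => (eucNorm (x i) : ℂ)⁻¹ * x i r)ᴴ *
        (Matrix.of fun r i => (eucNorm (x i) : ℂ)⁻¹ * x i r) *
        (Matrix.diagonal fun i => if ε' i then (1 : ℂ) else -1)} =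
    Submodule.span ℂ {E : Matrix (Fin n) (Fin n) ℂ | ∃ i j,
      (i = j ∨ ∑ r, star (x i r) * x j r ≠ 0) ∧ E = Matrix.single i j 1} := by
  set A : Matrix (Fin k) (Fin n) ℂ := of fun r i => (eucNorm (x i) : ℂ)⁻¹ * x i r
  have hscale : ∀ i, (eucNorm (x i) : ℂ)⁻¹ ≠ 0 := fun i => by
    simpa using eucNorm_ne_zero (hx i)
  have hgram : ∀ i j, (Aᴴ * A) i j ≠ 0 ↔ i = j ∨ star (x i) ⬝ᵥ x j ≠ 0 := by
    intro i j
    rw [conjTranspose_mul_self_of_scaled_columns_apply]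
    simp only [ne_eq, mul_eq_zero, star_eq_zero, hscale, false_or]
    refine ⟨Or.inr, ?_⟩
    rintro (rfl | h)
    · exact dotProduct_star_self_eq_zero.not.mpr (hx i)
    · exact h
  have hspan := span_signDiagonal_mul_mul_signDiagonal (Aᴴ * A)
  simp only [hgram, ← Matrix.mul_assoc] at hspan
  exact hspan
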